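/- Let W be a finite Coxeter group, let u, w ∈ W, and let v = U_{w⁻¹} ↓ u. Suppose z ∈ [u, wv] (the Bruhat interval), v' ≤ v in the strong Bruhat order, and z (v')⁻¹ ≤ w. Then v' = v. -/

import Mathlib

open Polynomial

namespace PaperBase

variable {B : Type*} {W : Type*} [Group W] {M : CoxeterMatrix B} (cs : CoxeterSystem M W)

/-- The strong Bruhat order: `u ≤ w` iff some reduced word for `w` has a sublist that is a
reduced word for `u`. -/
def BruhatLE (u w : W) : Prop :=
  ∃ ω : List B, cs.IsReduced ω ∧ cs.wordProd ω = w ∧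
    ∃ ω' : List B, ω'.Sublist ω ∧ cs.IsReduced ω' ∧ cs.wordProd ω' = u

/-- The strict strong Bruhat order. -/
def BruhatLT (u w : W) : Prop := BruhatLE cs u w ∧ u ≠ w

/-- The right weak Bruhat order: `u ≤_R w` iff `ℓ(w) = ℓ(u) + ℓ(u⁻¹ w)`. -/
def RWeakLE (u w : W) : Prop := cs.length w = cs.length u + cs.length (u⁻¹ * w)

/-- `U_ω ↑ v` along a word `ω`. -/
noncomputable def upLWord (ω : List B) (v : W) : W :=
  ω.foldr (fun i x => if cs.length x < cs.length (cs.simple i * x) then cs.simple i * x else x) v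

/-- `U_ω ↓ v` along a word `ω`. -/
noncomputable def downLWord (ω : List B) (v : W) : W :=
  ω.foldr (fun i x => if cs.length (cs.simple i * x) < cs.length x then cs.simple i * x else x) v

/-- `v ↑ U_ω` along a word `ω`. -/
noncomputable def upRWord (v : W) (ω : List B) : W :=
  ω.foldl (fun x i => if cs.length x < cs.length (x * cs.simple i) then x * cs.simple i else x) v

/-- `v ↓ U_ω` along a word `ω`. -/
noncomputable def downRWord (v : W) (ω : List B) : W :=
  ω.foldl (fun x i => if cs.length (x * cs.simple i) < cs.length x then x * cs.simple i else x) v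

/-- A chosen reduced word for `w`. -/
noncomputable def rword (w : W) : List B := (cs.exists_reduced_word' w).choose

theorem rword_isReduced (w : W) : cs.IsReduced (rword cs w) :=
  (cs.exists_reduced_word' w).choose_spec.1

theorem rword_wordProd (w : W) : cs.wordProd (rword cs w) = w :=
  ((cs.exists_reduced_word' w).choose_spec.2).symm

/-- `U_w ↑ v` for `w : W`, computed along a chosen reduced word for `w`. -/
noncomputable def upL (w v : W) : W := upLWord cs (rword cs w) v

/-- `U_w ↓ v` for `w : W`. -/
noncomputable def downL (w v : W) : W := downLWord cs (rword cs w) v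

/-- `v ↑ U_w` for `w : W`. -/
noncomputable def upR (v w : W) : W := upRWord cs v (rword cs w)

/-- `v ↓ U_w` for `w : W`. -/
noncomputable def downR (v w : W) : W := downRWord cs v (rword cs w)

/-- The Demazure (0-Hecke) product `u ∘ w`. -/
noncomputable def dem (u w : W) : W := upRWord cs u (rword cs w)

/-- Left multiplication by the Hecke algebra generator `T_{s i}` on the free
`ℤ[q]`-module with basis `{T_w}`, realized as `W →₀ ℤ[q]`:
`T_s T_w = T_{sw}` if `sw > w`, and `T_s T_w = (q-1) T_w + q T_{sw}` if `sw < w`. -/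
noncomputable def heckeMulSimple (i : B) (f : W →₀ Polynomial ℤ) : W →₀ Polynomial ℤ :=
  f.sum fun w c =>
    if cs.length w < cs.length (cs.simple i * w)
    then Finsupp.single (cs.simple i * w) c
    else Finsupp.single w ((X - 1) * c) + Finsupp.single (cs.simple i * w) (X * c)

/-- Left multiplication by `T_{π ω}` along a word `ω`. -/
noncomputable def heckeMulWord (ω : List B) (f : W →₀ Polynomial ℤ) : W →₀ Polynomial ℤ :=
  ω.foldr (heckeMulSimple cs) f

/-- The product `T_x T_y` in the Hecke algebra, expanded in the basis `{T_w}`. -/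
noncomputable def TT (x y : W) : W →₀ Polynomial ℤ :=
  heckeMulWord cs (rword cs x) (Finsupp.single y 1)

open Classical in
/-- The linear functional `Λ_w` with `Λ_w (T_y) = q^{ℓ(y)}` if `y ≤ w`, else `0`. -/
noncomputable def Lam (w : W) (f : W →₀ Polynomial ℤ) : Polynomial ℤ :=
  f.sum fun y c => if BruhatLE cs y w then X ^ cs.length y * c else 0

/-- `Θ(x, y, w) = Λ_w (T_x T_{y⁻¹})`. -/
noncomputable def Theta (x y w : W) : Polynomial ℤ := Lam cs w (TT cs x y⁻¹)



private def pbXorCount (f : ℕ → Bool) : ℕ → Bool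
  | 0 => false
  | n+1 => xor (pbXorCount f n) (f n)

private lemma pbXorCount_add (f : ℕ → Bool) (a b : ℕ) :
    pbXorCount f (a + b) = xor (pbXorCount f a) (pbXorCount (fun l => f (a + l)) b) := by
  induction b with
  | zero => simp [pbXorCount]
  | succ b ih => simp [pbXorCount, ih, Bool.xor_assoc]

private lemma pb_ite_bool (C : Prop) [Decidable C] (x : Bool) :
    (if C then !x else x) = xor (decide C) x := by
  by_cases h : C <;> simp [h]

private lemma pb_conj_iff (x y c : W) : (c * x * c⁻¹ = y) ↔ (x = c⁻¹ * y * c) := by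
  constructor
  · intro h; rw [← h]; group
  · intro h; rw [h]; group

private lemma pb_conj_iff' (x y c : W) (hc : c * c = 1) : (c * x * c = y) ↔ (x = c * y * c) := by
  have key : ∀ z : W, c * (c * z * c) * c = z := by
    intro z
    have h1 : c * (c * z * c) * c = (c * c) * z * (c * c) := by group
    rw [h1, hc, one_mul, mul_one]
  constructor
  · intro h; rw [← h, key]
  · intro h; rw [h, key]

open Classical in
/-- The permutation representation used to prove the strong exchange property. -/
noncomputable def etaAux (i : B) : Function.End (W × Bool) :=
  fun p => (cs.simple i * p.1 * cs.simple i, if p.1 = cs.simple i then !p.2 else p.2)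

open Classical in
private lemma etaAux_pow_apply (i j : B) (k : ℕ) (t : W) (ε : Bool) :
    ((etaAux cs i * etaAux cs j) ^ k) (t, ε) =
      ((cs.simple i * cs.simple j) ^ k * t * ((cs.simple i * cs.simple j) ^ k)⁻¹,
        xor (pbXorCount (fun l => decide (t = cs.simple j * (cs.simple i * cs.simple j) ^ l))
          (2 * k)) ε) := by
  have hjj := cs.simple_mul_simple_self j
  have hii := cs.simple_mul_simple_self i
  set a := cs.simple i with ha
  set b := cs.simple j with hb
  set p := a * b with hp
  have hbinv : b⁻¹ = b := by rw [hb, cs.inv_simple]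
  have hainv : a⁻¹ = a := by rw [ha, cs.inv_simple]
  have hpb : p * b = a := by rw [hp, mul_assoc, hjj, mul_one]
  have hconjb : ∀ l : ℕ, b * p ^ l * b⁻¹ = (p ^ l)⁻¹ := by
    intro l
    have h1 : b * p * b⁻¹ = p⁻¹ := by
      rw [hp, hbinv, mul_inv_rev, hbinv, hainv]
      rw [← mul_assoc, mul_assoc (b*a), hjj, mul_one]
    have := map_pow (MulAut.conj b) p l
    simp only [MulAut.conj_apply] at this
    rw [this, h1, inv_pow]
  have hmove : ∀ l : ℕ, (p ^ l)⁻¹ * b * p ^ l = b * p ^ (2 * l) := by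
    intro l
    rw [← hconjb l, hbinv]
    calc b * p ^ l * b * b * p ^ l = b * p ^ l * (b * b) * p ^ l := by group
      _ = b * (p ^ l * p ^ l) := by rw [hjj, mul_one, mul_assoc]
      _ = b * p ^ (2 * l) := by rw [← pow_add, two_mul]
  have hmove2 : ∀ l : ℕ, (p ^ l)⁻¹ * (b * a * b) * p ^ l = b * p ^ (2 * l + 1) := by
    intro l
    have hab : b * a * b = b * p := by
      rw [← hpb, ← mul_assoc, mul_assoc (b*p), hjj, mul_one]
    have hc : p * p ^ l = p ^ l * p := (pow_succ' p l).symm.trans (pow_succ p l)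
    rw [hab]
    calc (p ^ l)⁻¹ * (b * p) * p ^ l = (p ^ l)⁻¹ * b * (p * p ^ l) := by group
      _ = (p ^ l)⁻¹ * b * (p ^ l * p) := by rw [hc]
      _ = ((p ^ l)⁻¹ * b * p ^ l) * p := by group
      _ = b * p ^ (2 * l) * p := by rw [hmove]
      _ = b * p ^ (2 * l + 1) := by rw [mul_assoc, ← pow_succ]
  induction k with
  | zero =>
    simp only [pow_zero, Nat.mul_zero, pbXorCount, Bool.false_xor, inv_one, mul_one, one_mul]
    rfl
  | succ k ih =>
    rw [pow_succ']
    show (etaAux cs i * etaAux cs j) (((etaAux cs i * etaAux cs j) ^ k) (t, ε)) = _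
    rw [ih]
    show (etaAux cs i) ((etaAux cs j) _) = _
    simp only [etaAux, ← ha, ← hb]
    have h2k : 2 * (k+1) = (2*k) + 1 + 1 := by ring
    rw [h2k]
    simp only [pbXorCount]
    rw [Prod.mk.injEq]
    have key1 : (p ^ k * t * (p ^ k)⁻¹ = b) ↔ (t = b * p ^ (2*k)) := by
      rw [pb_conj_iff, hmove]
    have key2 : (b * (p ^ k * t * (p ^ k)⁻¹) * b = a) ↔ (t = b * p ^ (2*k+1)) := by
      rw [pb_conj_iff' _ _ b hjj, pb_conj_iff, hmove2]
    constructor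
    · have : a * (b * (p ^ k * t * (p ^ k)⁻¹) * b) * a = p * (p ^ k * t * (p ^ k)⁻¹) * p⁻¹ := by
        rw [hp, mul_inv_rev, hbinv, hainv]
        group
      rw [this]
      group
    · rw [pb_ite_bool, pb_ite_bool, decide_eq_decide.mpr key1, decide_eq_decide.mpr key2]
      generalize pbXorCount (fun l => decide (t = b * p ^ l)) (2*k) = X
      generalize decide (t = b * p ^ (2*k)) = d1
      generalize decide (t = b * p ^ (2*k+1)) = d2
      cases X <;> cases d1 <;> cases d2 <;> cases ε <;> rfl

open Classical in
private lemma etaAux_liftable : M.IsLiftable (etaAux cs) := by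
  intro i j
  funext x
  obtain ⟨t, ε⟩ := x
  rw [etaAux_pow_apply]
  have hpow := cs.simple_mul_simple_pow i j
  rw [hpow]
  have hz : pbXorCount (fun l => decide (t = cs.simple j * (cs.simple i * cs.simple j) ^ l))
      (2 * M i j) = false := by
    have h2 : 2 * M i j = M i j + M i j := by ring
    rw [h2, pbXorCount_add]
    have he : (fun l => decide (t = cs.simple j * (cs.simple i * cs.simple j) ^ (M i j + l)))
        = (fun l => decide (t = cs.simple j * (cs.simple i * cs.simple j) ^ l)) := by
      funext l
      rw [pow_add, hpow, one_mul]
    rw [he, Bool.xor_self]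
  rw [hz]
  simp only [one_mul, inv_one, mul_one, Bool.false_xor]
  rfl
open List in
noncomputable def etaHom : W →* Function.End (W × Bool) :=
  cs.lift ⟨etaAux cs, etaAux_liftable cs⟩

noncomputable def eta (w t : W) : Bool := ((etaHom cs w) (t, false)).2

open Classical in
private lemma etaHom_wordProd (ω : List B) (t : W) (ε : Bool) :
    etaHom cs (cs.wordProd ω) (t, ε) =
      (cs.wordProd ω * t * (cs.wordProd ω)⁻¹,
        xor (Nat.bodd (List.count t (cs.rightInvSeq ω))) ε) := by
  induction ω generalizing t ε with
  | nil =>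
    simp only [CoxeterSystem.wordProd_nil, map_one, CoxeterSystem.rightInvSeq_nil,
      List.count_nil, Nat.bodd_zero, Bool.false_xor, one_mul, inv_one, mul_one]
    rfl
  | cons i ω ih =>
    rw [CoxeterSystem.wordProd_cons, map_mul]
    show etaHom cs (cs.simple i) (etaHom cs (cs.wordProd ω) (t, ε)) = _
    rw [ih]
    have hs : etaHom cs (cs.simple i) = etaAux cs i := cs.lift_apply_simple (etaAux_liftable cs) i
    rw [hs]
    show (cs.simple i * (cs.wordProd ω * t * (cs.wordProd ω)⁻¹) * cs.simple i,
      if cs.wordProd ω * t * (cs.wordProd ω)⁻¹ = cs.simple i then !_ else _) = _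
    rw [Prod.mk.injEq]
    constructor
    · rw [mul_inv_rev, cs.inv_simple]
      group
    · show (if cs.wordProd ω * t * (cs.wordProd ω)⁻¹ = cs.simple i
          then !(xor (Nat.bodd (List.count t (cs.rightInvSeq ω))) ε)
          else xor (Nat.bodd (List.count t (cs.rightInvSeq ω))) ε) = _
      have hcnt : cs.rightInvSeq (i :: ω) =
          ((cs.wordProd ω)⁻¹ * cs.simple i * cs.wordProd ω) :: cs.rightInvSeq ω := rfl
      have hiff : (cs.wordProd ω * t * (cs.wordProd ω)⁻¹ = cs.simple i)
          ↔ ((cs.wordProd ω)⁻¹ * cs.simple i * cs.wordProd ω = t) := by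
        rw [pb_conj_iff]
        exact eq_comm
      rw [hcnt, List.count_cons, Nat.bodd_add]
      by_cases h : (cs.wordProd ω)⁻¹ * cs.simple i * cs.wordProd ω = t
      · rw [if_pos (hiff.mpr h), h]
        simp only [beq_self_eq_true, if_true, Nat.bodd_one]
        generalize (List.count t (cs.rightInvSeq ω)).bodd = X
        cases X <;> cases ε <;> rfl
      · rw [if_neg (fun hc => h (hiff.mp hc))]
        have hbeq : ((((cs.wordProd ω)⁻¹ * cs.simple i * cs.wordProd ω) == t) : Bool) = false := by
          simp only [beq_eq_false_iff_ne, ne_eq]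
          exact h
        rw [hbeq]
        simp

lemma eta_apply (w t : W) (ε : Bool) :
    etaHom cs w (t, ε) = (w * t * w⁻¹, xor (eta cs w t) ε) := by
  obtain ⟨ω, -, rfl⟩ := cs.exists_reduced_word' w
  rw [etaHom_wordProd, eta, etaHom_wordProd]
  simp

lemma eta_mul (x y t : W) : eta cs (x * y) t = xor (eta cs x (y * t * y⁻¹)) (eta cs y t) := by
  rw [eta, map_mul]
  show (etaHom cs x (etaHom cs y (t, false))).2 = _
  rw [eta_apply, eta_apply]
  simp [eta]

open Classical in
lemma eta_simple (i : B) (t : W) : eta cs (cs.simple i) t = decide (t = cs.simple i) := by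
  rw [eta]
  have hs : etaHom cs (cs.simple i) = etaAux cs i := cs.lift_apply_simple (etaAux_liftable cs) i
  rw [hs]
  show (if t = cs.simple i then !false else false) = _
  by_cases h : t = cs.simple i <;> simp [h]

open Classical in
lemma eta_self_of_isReflection {t : W} (ht : cs.IsReflection t) : eta cs t t = true := by
  obtain ⟨q, ι, rfl⟩ := ht
  obtain ⟨ω, -, rfl⟩ := cs.exists_reduced_word' q
  induction ω with
  | nil => simp [eta_simple]
  | cons i ω ih =>
    rw [CoxeterSystem.wordProd_cons]
    set q := cs.wordProd ω
    set t' := q * cs.simple ι * q⁻¹ with ht'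
    have hrw : cs.simple i * q * cs.simple ι * (cs.simple i * q)⁻¹
        = (cs.simple i * t') * cs.simple i := by
      rw [ht', mul_inv_rev, cs.inv_simple]
      group
    rw [hrw, eta_mul]
    have h2 : cs.simple i * ((cs.simple i * t') * cs.simple i) * (cs.simple i)⁻¹ = t' := by
      rw [cs.inv_simple, ← mul_assoc, ← mul_assoc, cs.simple_mul_simple_self, one_mul,
        mul_assoc, cs.simple_mul_simple_self, mul_one]
    rw [h2, eta_mul]
    have h3 : t' * t' * t'⁻¹ = t' := by group
    rw [h3, ih]
    rw [eta_simple, eta_simple]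
    have hiff2 : ((cs.simple i * t') * cs.simple i = cs.simple i) ↔ (t' = cs.simple i) := by
      have := pb_conj_iff' t' (cs.simple i) (cs.simple i) (cs.simple_mul_simple_self i)
      rw [this, cs.simple_mul_simple_self, one_mul]
    rw [decide_eq_decide.mpr hiff2]
    generalize decide (t' = cs.simple i) = d
    cases d <;> rfl

open Classical in
private lemma eta_eq_bodd_count (ω : List B) (t : W) :
    eta cs (cs.wordProd ω) t = Nat.bodd (List.count t (cs.rightInvSeq ω)) := by
  rw [eta, etaHom_wordProd]
  simp

open Classical in
lemma length_mul_lt_of_eta_eq_true {w t : W} (h : eta cs w t = true) :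
    cs.length (w * t) < cs.length w := by
  obtain ⟨ω, hred, hw⟩ := cs.exists_reduced_word' w
  subst hw
  rw [eta_eq_bodd_count] at h
  have hcount : List.count t (cs.rightInvSeq ω) ≠ 0 := by
    intro hc
    rw [hc] at h
    simp at h
  have hmem : t ∈ cs.rightInvSeq ω := by
    by_contra hmem
    exact hcount (List.count_eq_zero.mpr hmem)
  exact (cs.isRightInversion_of_mem_rightInvSeq hred hmem).2

lemma eta_eq_true_of_lt {w t : W} (ht : cs.IsReflection t)
    (h : cs.length (w * t) < cs.length w) : eta cs w t = true := by
  have hw : w = (w * t) * t := by rw [mul_assoc, ht.mul_self, mul_one]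
  have h3 : t * t * t⁻¹ = t := by group
  have hfalse : eta cs (w * t) t = false := by
    by_contra hc
    have := length_mul_lt_of_eta_eq_true cs (t := t) (w := w * t) (by
      cases hh : eta cs (w * t) t
      · exact absurd hh hc
      · rfl)
    rw [mul_assoc, ht.mul_self, mul_one] at this
    omega
  conv_lhs => rw [hw]
  rw [eta_mul, h3, eta_self_of_isReflection cs ht, hfalse]
  rfl

open Classical in
lemma mem_rightInvSeq_of_lt {ω : List B} (hred : cs.IsReduced ω) {t : W}
    (ht : cs.IsReflection t) (h : cs.length (cs.wordProd ω * t) < cs.length (cs.wordProd ω)) :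
    t ∈ cs.rightInvSeq ω := by
  have := eta_eq_true_of_lt cs ht h
  rw [eta_eq_bodd_count] at this
  have hcount : List.count t (cs.rightInvSeq ω) ≠ 0 := by
    intro hc
    rw [hc] at this
    simp at this
  by_contra hmem
  exact hcount (List.count_eq_zero.mpr hmem)

/-- The strong exchange property, right version. -/
lemma exists_eraseIdx_of_lt {ω : List B} (hred : cs.IsReduced ω) {t : W}
    (ht : cs.IsReflection t) (h : cs.length (cs.wordProd ω * t) < cs.length (cs.wordProd ω)) :
    ∃ k, k < ω.length ∧ cs.wordProd (ω.eraseIdx k) = cs.wordProd ω * t := by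
  have hmem := mem_rightInvSeq_of_lt cs hred ht h
  obtain ⟨k, hk, hget⟩ := List.getElem_of_mem hmem
  refine ⟨k, by simpa using hk, ?_⟩
  rw [← cs.wordProd_mul_getD_rightInvSeq ω k]
  congr 1
  rw [List.getD_eq_getElem _ _ hk, hget]

/-- The strong exchange property, left version. -/
lemma exists_eraseIdx_of_lt_left {ω : List B} (hred : cs.IsReduced ω) {t : W}
    (ht : cs.IsReflection t) (h : cs.length (t * cs.wordProd ω) < cs.length (cs.wordProd ω)) :
    ∃ k, k < ω.length ∧ cs.wordProd (ω.eraseIdx k) = t * cs.wordProd ω := by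
  have hrev : cs.IsReduced ω.reverse := (cs.isReduced_reverse_iff ω).mpr hred
  have hlen : cs.length (cs.wordProd ω.reverse * t) < cs.length (cs.wordProd ω.reverse) := by
    rw [cs.wordProd_reverse]
    have e1 : cs.length ((cs.wordProd ω)⁻¹ * t) = cs.length (t * cs.wordProd ω) := by
      rw [← cs.length_inv ((cs.wordProd ω)⁻¹ * t), mul_inv_rev, inv_inv, ht.inv]
    rw [e1, cs.length_inv]
    exact h
  have hmem : t ∈ cs.rightInvSeq ω.reverse := mem_rightInvSeq_of_lt cs hrev ht hlen
  rw [cs.rightInvSeq_reverse, List.mem_reverse] at hmem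
  obtain ⟨k, hk, hget⟩ := List.getElem_of_mem hmem
  have hk' : k < ω.length := by simpa using hk
  refine ⟨k, hk', ?_⟩
  rw [← cs.getD_leftInvSeq_mul_wordProd ω k]
  congr 1
  rw [List.getD_eq_getElem _ _ hk, hget]

/-- The Bruhat order, defined via chains of reflections increasing length. -/
def CLE (x y : W) : Prop :=
  Relation.ReflTransGen
    (fun a b => ∃ t, cs.IsReflection t ∧ b = a * t ∧ cs.length a < cs.length b) x y

lemma cle_refl (x : W) : CLE cs x x := Relation.ReflTransGen.refl

lemma cle_trans {x y z : W} (h1 : CLE cs x y) (h2 : CLE cs y z) : CLE cs x z := h1.trans h2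

lemma cle_step {x t : W} (ht : cs.IsReflection t) (hl : cs.length x < cs.length (x * t)) :
    CLE cs x (x * t) :=
  Relation.ReflTransGen.single ⟨t, ht, rfl, hl⟩

lemma cle_length_le {x y : W} (h : CLE cs x y) : cs.length x ≤ cs.length y := by
  induction h with
  | refl => exact le_rfl
  | tail h1 h2 ih =>
    obtain ⟨t, -, rfl, hl⟩ := h2
    omega

lemma cle_eq_of_length_ge {x y : W} (h : CLE cs x y) (hlen : cs.length y ≤ cs.length x) :
    x = y := by
  cases h.cases_tail with
  | inl h => exact h.symm ▸ rfl
  | inr h =>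
    obtain ⟨y', h1, t, -, rfl, hl⟩ := h
    have := cle_length_le cs h1
    omega

/-- Multiplying on the left by a simple reflection that increases length goes up. -/
lemma cle_simple_mul {i : B} {x : W} (h : cs.length x < cs.length (cs.simple i * x)) :
    CLE cs x (cs.simple i * x) := by
  have ht : cs.IsReflection (x⁻¹ * cs.simple i * x) := ⟨x⁻¹, i, by rw [inv_inv]⟩
  have hx : cs.simple i * x = x * (x⁻¹ * cs.simple i * x) := by group
  rw [hx] at h ⊢
  exact cle_step cs ht h

lemma cle_simple_mul' {i : B} {x : W} (h : cs.length (cs.simple i * x) < cs.length x) :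
    CLE cs (cs.simple i * x) x := by
  have := cle_simple_mul cs (i := i) (x := cs.simple i * x)
    (by rwa [← mul_assoc, cs.simple_mul_simple_self, one_mul])
  rwa [← mul_assoc, cs.simple_mul_simple_self, one_mul] at this

/-- The parity of lengths across a reflection step differs. -/
private lemma pb_length_parity {y t : W} (ht : cs.IsReflection t) :
    cs.length (y * t) % 2 ≠ cs.length y % 2 := by
  have h1 := cs.length_mul_mod_two y t
  obtain ⟨c, hc⟩ := ht.odd_length
  omega

/-- The lifting property of the Bruhat order (downward version). -/
lemma cle_down {i : B} {x w : W} (h : CLE cs x w)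
    (hw : cs.length (cs.simple i * w) < cs.length w) :
    CLE cs (if cs.length (cs.simple i * x) < cs.length x then cs.simple i * x else x)
      (cs.simple i * w) := by
  induction h with
  | refl =>
    rw [if_pos hw]
    exact cle_refl cs _
  | @tail y w' hxy hstep ih =>
    obtain ⟨t, htr, rfl, hlt⟩ := hstep
    have hmxy : CLE cs
        (if cs.length (cs.simple i * x) < cs.length x then cs.simple i * x else x) y := by
      by_cases hx : cs.length (cs.simple i * x) < cs.length x
      · rw [if_pos hx]
        exact cle_trans cs (cle_simple_mul' cs hx) hxy
      · rw [if_neg hx]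
        exact hxy
    have hassoc : cs.simple i * (y * t) = (cs.simple i * y) * t := by group
    by_cases hy : cs.length (cs.simple i * y) < cs.length y
    · -- descend through y
      refine cle_trans cs (ih hy) ?_
      have h1 : cs.length (cs.simple i * y) + 1 = cs.length y := by
        rcases cs.length_simple_mul y i with h | h <;> omega
      have h2 : cs.length (cs.simple i * (y * t)) + 1 = cs.length (y * t) := by
        rcases cs.length_simple_mul (y * t) i with h | h <;> omega
      rw [hassoc] at h2 ⊢
      exact cle_step cs htr (by omega)
    · have hne := cs.length_simple_mul_ne y i
      have hy' : cs.length y < cs.length (cs.simple i * y) := by omega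
      have h1 : cs.length (cs.simple i * y) = cs.length y + 1 := by
        rcases cs.length_simple_mul y i with h | h <;> omega
      have h2 : cs.length (cs.simple i * (y * t)) + 1 = cs.length (y * t) := by
        rcases cs.length_simple_mul (y * t) i with h | h <;> omega
      have h2a : cs.length ((cs.simple i * y) * t) + 1 = cs.length (y * t) := by
        rw [← hassoc]; exact h2
      -- parity: lengths of y and y*t differ by an odd number
      have hpar := pb_length_parity cs (y := y) htr
      rcases Nat.lt_or_ge (cs.length y + 2) (cs.length (y * t)) with hbig | hsmall
      · -- case α : long jump
        refine cle_trans cs hmxy (cle_trans cs (cle_simple_mul cs hy') ?_)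
        rw [hassoc]
        exact cle_step cs htr (by omega)
      · -- case β : cover step, use the strong exchange property
        have hcover : cs.length (y * t) = cs.length y + 1 := by omega
        obtain ⟨ω', hred', hw'⟩ := cs.exists_reduced_word' (cs.simple i * (y * t))
        have hπ2 : cs.wordProd (i :: ω') = y * t := by
          rw [cs.wordProd_cons, ← hw', ← mul_assoc, cs.simple_mul_simple_self, one_mul]
        have hred2 : cs.IsReduced (i :: ω') := by
          unfold CoxeterSystem.IsReduced
          rw [hπ2, List.length_cons, ← hred', ← hw']
          omega
        have hlt2 : cs.length (cs.wordProd (i :: ω') * t) < cs.length (cs.wordProd (i :: ω')) := by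
          rw [hπ2, mul_assoc, htr.mul_self, mul_one]
          omega
        obtain ⟨k, hk, heq⟩ := exists_eraseIdx_of_lt cs hred2 htr hlt2
        rw [hπ2, mul_assoc, htr.mul_self, mul_one] at heq
        cases k with
        | zero =>
          rw [List.eraseIdx_cons_zero, ← hw'] at heq
          rw [heq]
          exact hmxy
        | succ k' =>
          exfalso
          rw [List.eraseIdx_cons_succ, cs.wordProd_cons] at heq
          have hsiy : cs.wordProd (ω'.eraseIdx k') = cs.simple i * y := by
            rw [← heq, ← mul_assoc, cs.simple_mul_simple_self, one_mul]
          have hbound := cs.length_wordProd_le (ω'.eraseIdx k')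
          rw [hsiy] at hbound
          have hk' : k' < ω'.length := by
            simp only [List.length_cons] at hk
            omega
          have hlenerase : (ω'.eraseIdx k').length = ω'.length - 1 := by
            rw [List.length_eraseIdx, if_pos hk']
          have hωlen : ω'.length + 1 = cs.length (y * t) := by
            rw [← hred', ← hw']
            omega
          omega

/-- The lifting property of the Bruhat order (upward version). -/
lemma cle_up {i : B} {x y : W} (h : CLE cs x y)
    (hx : cs.length x < cs.length (cs.simple i * x))
    (hy : cs.length y < cs.length (cs.simple i * y)) :
    CLE cs (cs.simple i * x) (cs.simple i * y) := by
  suffices H : ∀ n x y, cs.length y ≤ n → CLE cs x y →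
      cs.length x < cs.length (cs.simple i * x) →
      cs.length y < cs.length (cs.simple i * y) →
      CLE cs (cs.simple i * x) (cs.simple i * y) from
    H (cs.length y) x y le_rfl h hx hy
  intro n
  induction n with
  | zero =>
    intro x y hn h hx hy
    have hxy : x = y := cle_eq_of_length_ge cs h (by omega)
    rw [hxy]
    exact cle_refl cs _
  | succ n ih =>
    intro x y hn h hx hy
    cases h.cases_tail with
    | inl heq => rw [heq]; exact cle_refl cs _
    | inr h' =>
      obtain ⟨y', hxy', t, htr, rfl, hlt⟩ := h'
      have hassoc : cs.simple i * (y' * t) = (cs.simple i * y') * t := by group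
      by_cases hy'd : cs.length (cs.simple i * y') < cs.length y'
      · -- y' goes down
        have hdown := cle_down cs hxy' hy'd
        rw [if_neg (by omega)] at hdown
        have hss : cs.simple i * (cs.simple i * y') = y' := by
          rw [← mul_assoc, cs.simple_mul_simple_self, one_mul]
        have h1 := ih x (cs.simple i * y') (by omega) hdown hx (by rw [hss]; exact hy'd)
        rw [hss] at h1
        refine cle_trans cs h1 (cle_trans cs (Relation.ReflTransGen.single ⟨t, htr, rfl, hlt⟩) ?_)
        exact cle_simple_mul cs hy
      · have hne := cs.length_simple_mul_ne y' i
        have hy'' : cs.length y' < cs.length (cs.simple i * y') := by omega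
        have h1 := ih x y' (by omega) hxy' hx hy''
        refine cle_trans cs h1 ?_
        rw [hassoc]
        have hl1 : cs.length (cs.simple i * y') = cs.length y' + 1 := by
          rcases cs.length_simple_mul y' i with hh | hh <;> omega
        have hl2 : cs.length (cs.simple i * (y' * t)) = cs.length (y' * t) + 1 := by
          rcases cs.length_simple_mul (y' * t) i with hh | hh <;> omega
        rw [hassoc] at hl2
        exact cle_step cs htr (by omega)

/-- One half of the subword property: the product of a reduced subword is below in Bruhat order. -/
lemma cle_of_sublist {ω σ : List B} (hred : cs.IsReduced ω) (hsub : σ.Sublist ω)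
    (hredσ : cs.IsReduced σ) : CLE cs (cs.wordProd σ) (cs.wordProd ω) := by
  induction ω generalizing σ with
  | nil =>
    rw [List.sublist_nil.mp hsub]
    exact cle_refl cs _
  | cons i ω' ihω =>
    have hredω' : cs.IsReduced ω' := by
      have := CoxeterSystem.IsReduced.drop hred (j := 1)
      simpa using this
    have hlω : cs.length (cs.wordProd (i :: ω')) = ω'.length + 1 := by
      rw [hred]; simp
    have hlω' : cs.length (cs.wordProd ω') = ω'.length := hredω'
    cases hsub with
    | cons _ hsub' =>
      refine cle_trans cs (ihω hredω' hsub' hredσ) ?_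
      rw [cs.wordProd_cons]
      exact cle_simple_mul cs (by rw [← cs.wordProd_cons]; omega)
    | cons_cons _ hsub' =>
      rename_i σ'
      have hredσ' : cs.IsReduced σ' := by
        have := CoxeterSystem.IsReduced.drop hredσ (j := 1)
        simpa using this
      have hlσ : cs.length (cs.wordProd (i :: σ')) = σ'.length + 1 := by
        rw [hredσ]; simp
      have hlσ' : cs.length (cs.wordProd σ') = σ'.length := hredσ'
      rw [cs.wordProd_cons, cs.wordProd_cons]
      exact cle_up cs (ihω hredω' hsub' hredσ')
        (by rw [← cs.wordProd_cons]; omega) (by rw [← cs.wordProd_cons]; omega)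

/-- The other half of the subword property: every reduced word for `w` contains a reduced
word for each `x ≤ w` as a subword. -/
lemma exists_sublist_of_cle (ω : List B) : ∀ {x w : W}, CLE cs x w →
    cs.IsReduced ω → cs.wordProd ω = w →
    ∃ σ, σ.Sublist ω ∧ cs.IsReduced σ ∧ cs.wordProd σ = x := by
  induction ω with
  | nil =>
    intro x w h hred hw
    have hw1 : w = 1 := by rw [← hw, cs.wordProd_nil]
    have hx : x = w := cle_eq_of_length_ge cs h (by rw [hw1]; simp)
    exact ⟨[], List.Sublist.refl _, by simp [CoxeterSystem.IsReduced], by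
      rw [cs.wordProd_nil, hx, hw1]⟩
  | cons i ω' ih =>
    intro x w h hred hw
    have hredω' : cs.IsReduced ω' := by
      have := CoxeterSystem.IsReduced.drop hred (j := 1)
      simpa using this
    have hsiw : cs.simple i * w = cs.wordProd ω' := by
      rw [← hw, cs.wordProd_cons, ← mul_assoc, cs.simple_mul_simple_self, one_mul]
    have hlw : cs.length w = ω'.length + 1 := by rw [← hw, hred]; simp
    have hd : cs.length (cs.simple i * w) < cs.length w := by
      rw [hsiw, hredω']
      omega
    have hdown := cle_down cs h hd
    by_cases hx : cs.length (cs.simple i * x) < cs.length x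
    · rw [if_pos hx] at hdown
      rw [hsiw] at hdown
      obtain ⟨σ', hsub', hredσ', hπσ'⟩ := ih hdown hredω' rfl
      refine ⟨i :: σ', hsub'.cons₂ i, ?_, ?_⟩
      · have hlx : cs.length (cs.simple i * x) + 1 = cs.length x := by
          rcases cs.length_simple_mul x i with hh | hh <;> omega
        unfold CoxeterSystem.IsReduced
        rw [cs.wordProd_cons, hπσ', ← mul_assoc, cs.simple_mul_simple_self, one_mul,
          List.length_cons]
        have hlσ : cs.length (cs.simple i * x) = σ'.length := by
          rw [← hπσ']; exact hredσ'
        omega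
      · rw [cs.wordProd_cons, hπσ', ← mul_assoc, cs.simple_mul_simple_self, one_mul]
    · rw [if_neg hx] at hdown
      rw [hsiw] at hdown
      obtain ⟨σ', hsub', hredσ', hπσ'⟩ := ih hdown hredω' rfl
      exact ⟨σ', hsub'.cons i, hredσ', hπσ'⟩



/-- The subword definition of the Bruhat order agrees with the chain definition. -/
lemma bruhatLE_iff_cle {u w : W} : BruhatLE cs u w ↔ CLE cs u w := by
  constructor
  · rintro ⟨ω, hred, rfl, σ, hsub, hredσ, rfl⟩
    exact cle_of_sublist cs hred hsub hredσ
  · intro h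
    obtain ⟨ω, hred, hw⟩ := cs.exists_reduced_word' w
    obtain ⟨σ, hsub, hredσ, hπσ⟩ := exists_sublist_of_cle cs ω h hred hw.symm
    exact ⟨ω, hred, hw.symm, σ, hsub, hredσ, hπσ⟩

/-- Every word contains a reduced subword with the same product (deletion property). -/
lemma exists_reduced_sublist (ω : List B) :
    ∃ σ, σ.Sublist ω ∧ cs.IsReduced σ ∧ cs.wordProd σ = cs.wordProd ω := by
  induction ω with
  | nil => exact ⟨[], List.Sublist.refl _, by simp [CoxeterSystem.IsReduced], rfl⟩
  | cons i ω' ih =>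
    obtain ⟨σ', hsub', hredσ', hπσ'⟩ := ih
    by_cases h : cs.length (cs.simple i * cs.wordProd σ') < cs.length (cs.wordProd σ')
    · obtain ⟨k, hk, heq⟩ := exists_eraseIdx_of_lt_left cs hredσ'
        (cs.isReflection_simple i) h
      refine ⟨σ'.eraseIdx k, ?_, ?_, ?_⟩
      · exact ((σ'.eraseIdx_sublist k).trans hsub').cons i
      · unfold CoxeterSystem.IsReduced
        rw [heq, List.length_eraseIdx, if_pos hk]
        have h1 : cs.length (cs.simple i * cs.wordProd σ') + 1 = cs.length (cs.wordProd σ') := by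
          rcases cs.length_simple_mul (cs.wordProd σ') i with hh | hh <;> omega
        have h2 : cs.length (cs.wordProd σ') = σ'.length := hredσ'
        omega
      · rw [heq, hπσ', cs.wordProd_cons]
    · have hne := cs.length_simple_mul_ne (cs.wordProd σ') i
      refine ⟨i :: σ', hsub'.cons₂ i, ?_, ?_⟩
      · unfold CoxeterSystem.IsReduced
        rw [cs.wordProd_cons, List.length_cons]
        have h2 : cs.length (cs.wordProd σ') = σ'.length := hredσ'
        have h1 : cs.length (cs.simple i * cs.wordProd σ') = cs.length (cs.wordProd σ') + 1 := by
          rcases cs.length_simple_mul (cs.wordProd σ') i with hh | hh <;> omega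
        omega
      · rw [cs.wordProd_cons, hπσ', cs.wordProd_cons]

/-- Multiplicativity of the Bruhat order along length-additive products. -/
lemma cle_mul {x p y q : W} (hx : CLE cs x p) (hy : CLE cs y q)
    (hadd : cs.length (p * q) = cs.length p + cs.length q) :
    CLE cs (x * y) (p * q) := by
  obtain ⟨ωp, hredp, hwp⟩ := cs.exists_reduced_word' p
  obtain ⟨ωq, hredq, hwq⟩ := cs.exists_reduced_word' q
  have hredpq : cs.IsReduced (ωp ++ ωq) := by
    unfold CoxeterSystem.IsReduced
    rw [cs.wordProd_append, ← hwp, ← hwq, hadd, List.length_append]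
    rw [hwp, hwq, hredp, hredq]
  obtain ⟨σx, hsubx, hredx, hπx⟩ := exists_sublist_of_cle cs ωp hx hredp hwp.symm
  obtain ⟨σy, hsuby, hredy, hπy⟩ := exists_sublist_of_cle cs ωq hy hredq hwq.symm
  obtain ⟨σ, hsub, hredσ, hπσ⟩ := exists_reduced_sublist cs (σx ++ σy)
  refine (bruhatLE_iff_cle cs).mp ⟨ωp ++ ωq, hredpq, ?_, σ, ?_, hredσ, ?_⟩
  · rw [cs.wordProd_append, ← hwp, ← hwq]
  · exact hsub.trans (hsubx.append hsuby)
  · rw [hπσ, cs.wordProd_append, hπx, hπy]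

/-- If `ℓ(xs) = ℓ(x) + 1`, `ℓ(sy) = ℓ(y) + 1` and `ℓ(xy) = ℓ(x) + ℓ(y)`, then
`ℓ(xsy) = ℓ(x) + ℓ(y) + 1`. -/
lemma length_mul_simple_mul {x y : W} (i : B)
    (hxs : cs.length (x * cs.simple i) = cs.length x + 1)
    (hsy : cs.length (cs.simple i * y) = cs.length y + 1)
    (hxy : cs.length (x * y) = cs.length x + cs.length y) :
    cs.length (x * cs.simple i * y) = cs.length x + cs.length y + 1 := by
  set t := y⁻¹ * cs.simple i * y with htdef
  have htr : cs.IsReflection t := ⟨y⁻¹, i, by rw [inv_inv]⟩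
  have hxyt : (x * y) * t = x * cs.simple i * y := by rw [htdef]; group
  have hne : cs.length ((x * y) * t) ≠ cs.length (x * y) := htr.length_mul_left_ne (x * y)
  have hub : cs.length (x * cs.simple i * y) ≤ cs.length x + cs.length y + 1 := by
    calc cs.length (x * cs.simple i * y) ≤ cs.length (x * cs.simple i) + cs.length y :=
          cs.length_mul_le _ _
      _ = cs.length x + cs.length y + 1 := by omega
  have hnotlt : ¬ cs.length ((x * y) * t) < cs.length (x * y) := by
    intro hlt
    obtain ⟨ωx, hredx, hwx⟩ := cs.exists_reduced_word' x
    obtain ⟨ωy, hredy, hwy⟩ := cs.exists_reduced_word' y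
    have hπ : cs.wordProd (ωx ++ ωy) = x * y := by rw [cs.wordProd_append, ← hwx, ← hwy]
    have hredxy : cs.IsReduced (ωx ++ ωy) := by
      unfold CoxeterSystem.IsReduced
      rw [hπ, hxy, List.length_append, hwx, hwy, hredx, hredy]
    rw [← hπ] at hlt
    obtain ⟨k, hk, heq⟩ := exists_eraseIdx_of_lt cs hredxy htr hlt
    rw [hπ, hxyt] at heq
    rw [List.length_append] at hk
    by_cases hka : k < ωx.length
    · rw [List.eraseIdx_append_of_lt_length hka, cs.wordProd_append] at heq
      rw [← hwy] at heq
      have hxv : cs.wordProd (ωx.eraseIdx k) = x * cs.simple i := mul_right_cancel heq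
      have hbound := cs.length_wordProd_le (ωx.eraseIdx k)
      rw [hxv, List.length_eraseIdx, if_pos hka] at hbound
      have : ωx.length = cs.length x := by rw [← hredx, hwx]
      omega
    · have hka' : ωx.length ≤ k := by omega
      rw [List.eraseIdx_append_of_length_le hka', cs.wordProd_append] at heq
      rw [← hwx, mul_assoc] at heq
      have hyv : cs.wordProd (ωy.eraseIdx (k - ωx.length)) = cs.simple i * y :=
        mul_left_cancel heq
      have hbound := cs.length_wordProd_le (ωy.eraseIdx (k - ωx.length))
      rw [hyv, List.length_eraseIdx, if_pos (by omega)] at hbound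
      have : ωy.length = cs.length y := by rw [← hredy, hwy]
      omega
  rw [← hxyt]
  rw [← hxyt] at hub
  omega



private lemma downLWord_cons (i : B) (ω : List B) (u : W) :
    downLWord cs (i :: ω) u =
      if cs.length (cs.simple i * downLWord cs ω u) < cs.length (downLWord cs ω u)
      then cs.simple i * downLWord cs ω u else downLWord cs ω u := rfl

private lemma downLWord_append (ω₁ ω₂ : List B) (u : W) :
    downLWord cs (ω₁ ++ ω₂) u = downLWord cs ω₁ (downLWord cs ω₂ u) := by
  simp [downLWord, List.foldr_append]

/-- The product `w ⬝ (U_{w⁻¹} ↓ u)` is length-additive. -/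
lemma length_mul_downLWord (ω : List B) (hred : cs.IsReduced ω) (u : W) :
    cs.length ((cs.wordProd ω)⁻¹ * downLWord cs ω u) =
      cs.length (cs.wordProd ω)⁻¹ + cs.length (downLWord cs ω u) := by
  induction ω with
  | nil =>
    simp [downLWord]
  | cons i ω' ihω =>
    have hredω' : cs.IsReduced ω' := by
      have := CoxeterSystem.IsReduced.drop hred (j := 1)
      simpa using this
    have ih := ihω hredω'
    set v₁ := downLWord cs ω' u with hv₁
    have hlω : cs.length (cs.wordProd (i :: ω'))⁻¹ = ω'.length + 1 := by
      rw [cs.length_inv, hred]; simp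
    have hlω₁ : cs.length (cs.wordProd ω')⁻¹ = ω'.length := by
      rw [cs.length_inv, hredω']
    have hinv : (cs.wordProd (i :: ω'))⁻¹ = (cs.wordProd ω')⁻¹ * cs.simple i := by
      rw [cs.wordProd_cons, mul_inv_rev, cs.inv_simple]
    rw [downLWord_cons]
    rw [← hv₁]
    by_cases hc : cs.length (cs.simple i * v₁) < cs.length v₁
    · rw [if_pos hc]
      have hcancel : (cs.wordProd (i :: ω'))⁻¹ * (cs.simple i * v₁) = (cs.wordProd ω')⁻¹ * v₁ := by
        rw [hinv, mul_assoc, ← mul_assoc (cs.simple i), cs.simple_mul_simple_self, one_mul]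
      rw [hcancel, ih, hlω, hlω₁]
      have : cs.length (cs.simple i * v₁) + 1 = cs.length v₁ := by
        rcases cs.length_simple_mul v₁ i with hh | hh <;> omega
      omega
    · rw [if_neg hc]
      have hne := cs.length_simple_mul_ne v₁ i
      have hsy : cs.length (cs.simple i * v₁) = cs.length v₁ + 1 := by
        rcases cs.length_simple_mul v₁ i with hh | hh <;> omega
      have hxs : cs.length ((cs.wordProd ω')⁻¹ * cs.simple i) = cs.length (cs.wordProd ω')⁻¹ + 1 := by
        rw [← hinv, hlω, hlω₁]
      have := length_mul_simple_mul cs i hxs hsy ih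
      rw [hinv, hlω, hlω₁] at *
      omega

/-- Main lemma: the word version of the theorem. -/
lemma main_word (ω : List B) : ∀ u z v' : W, cs.IsReduced ω →
    CLE cs u z → CLE cs z ((cs.wordProd ω)⁻¹ * downLWord cs ω u) →
    CLE cs v' (downLWord cs ω u) → CLE cs (z * v'⁻¹) (cs.wordProd ω)⁻¹ →
    v' = downLWord cs ω u := by
  induction ω using List.reverseRecOn with
  | nil =>
    intro u z v' _ h1 h2 h3 h4
    simp only [CoxeterSystem.wordProd_nil, inv_one, one_mul] at h2 h4
    have hdl : downLWord cs [] u = u := rfl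
    rw [hdl] at h2 ⊢
    have hzu : u = z := cle_eq_of_length_ge cs h1 (cle_length_le cs h2)
    have ha1 : z * v'⁻¹ = 1 := by
      have h0 := cle_length_le cs h4
      rw [cs.length_one] at h0
      exact cs.length_eq_zero_iff.mp (by omega)
    have : v' = z := by
      have := mul_inv_eq_one.mp ha1
      exact this.symm
    rw [this, ← hzu]
  | append_singleton ω₁ j ihω =>
    intro u z v' hred h1 h2 h3 h4
    set s := cs.simple j with hs
    set u₁ := if cs.length (cs.simple j * u) < cs.length u then cs.simple j * u else u with hu₁
    have hsplit : downLWord cs (ω₁ ++ [j]) u = downLWord cs ω₁ u₁ := by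
      rw [downLWord_append]
      rfl
    set v := downLWord cs ω₁ u₁ with hv
    have hred₁ : cs.IsReduced ω₁ := by
      have := CoxeterSystem.IsReduced.take hred (j := ω₁.length)
      rwa [List.take_left] at this
    set w₂ := (cs.wordProd ω₁)⁻¹ with hw₂
    have hwinv : (cs.wordProd (ω₁ ++ [j]))⁻¹ = s * w₂ := by
      rw [cs.wordProd_append, mul_inv_rev, hw₂, hs]
      congr 1
      rw [cs.wordProd_singleton, cs.inv_simple]
    have hlw : cs.length (s * w₂) = ω₁.length + 1 := by
      rw [← hwinv, cs.length_inv, hred]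
      simp
    have hlw₂ : cs.length w₂ = ω₁.length := by
      rw [hw₂, cs.length_inv, hred₁]
    have H₂ : cs.length (w₂ * v) = cs.length w₂ + cs.length v :=
      length_mul_downLWord cs ω₁ hred₁ u₁
    have Hfull := length_mul_downLWord cs (ω₁ ++ [j]) hred u
    rw [hsplit, hwinv] at Hfull
    have hassoc : s * w₂ * v = s * (w₂ * v) := by group
    rw [hassoc] at Hfull
    have hcov : cs.length (w₂ * v) < cs.length (s * (w₂ * v)) := by
      rw [Hfull, hlw]
      omega
    -- rewrite the hypotheses
    rw [hsplit] at h3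
    rw [hsplit, hwinv, hassoc] at h2
    rw [hwinv] at h4
    -- basic facts
    have hu₁u : CLE cs u₁ u := by
      rw [hu₁]
      by_cases hc : cs.length (cs.simple j * u) < cs.length u
      · rw [if_pos hc]
        exact cle_simple_mul' cs hc
      · rw [if_neg hc]
        exact cle_refl cs u
    have hssw : cs.simple j * (s * w₂) = w₂ := by
      rw [hs, ← mul_assoc, cs.simple_mul_simple_self, one_mul]
    have hdw : cs.length (cs.simple j * (s * w₂)) < cs.length (s * w₂) := by
      rw [hssw, hlw, hlw₂]
      omega
    have hadown := cle_down cs h4 hdw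
    rw [hssw] at hadown
    have hssm : cs.simple j * (s * (w₂ * v)) = w₂ * v := by
      rw [hs, ← mul_assoc, cs.simple_mul_simple_self, one_mul]
    have hdm : cs.length (cs.simple j * (s * (w₂ * v))) < cs.length (s * (w₂ * v)) := by
      rw [hssm]
      exact hcov
    have hzdown := cle_down cs h2 hdm
    rw [hssm] at hzdown
    -- the inductive hypothesis, specialized
    have IH : ∀ z₂ : W, CLE cs u₁ z₂ → CLE cs z₂ (w₂ * v) → CLE cs (z₂ * v'⁻¹) w₂ →
        v' = v := by
      intro z₂ ha hb hc
      exact ihω u₁ z₂ v' hred₁ ha hb h3 hc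
    rw [hsplit]
    by_cases hsz : cs.length (cs.simple j * z) < cs.length z
    · rw [if_pos hsz] at hzdown
      have huz : CLE cs u₁ (cs.simple j * z) := by
        have := cle_down cs h1 hsz
        rw [← hu₁] at this
        exact this
      by_cases haz : cs.length (cs.simple j * (z * v'⁻¹)) < cs.length (z * v'⁻¹)
      · rw [if_pos haz] at hadown
        refine IH (cs.simple j * z) huz hzdown ?_
        have : cs.simple j * z * v'⁻¹ = cs.simple j * (z * v'⁻¹) := by group
        rw [this]
        exact hadown
      · rw [if_neg haz] at hadown
        have hzv : CLE cs z (w₂ * v) := by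
          have := cle_mul cs hadown h3 H₂
          have he : z * v'⁻¹ * v' = z := by group
          rwa [he] at this
        exact IH z (cle_trans cs hu₁u h1) hzv hadown
    · rw [if_neg hsz] at hzdown
      have hu₁z : CLE cs u₁ z := cle_trans cs hu₁u h1
      by_cases haz : cs.length (cs.simple j * (z * v'⁻¹)) < cs.length (z * v'⁻¹)
      · rw [if_pos haz] at hadown
        have hszv : CLE cs (cs.simple j * z) (w₂ * v) := by
          have := cle_mul cs hadown h3 H₂
          have he : cs.simple j * (z * v'⁻¹) * v' = cs.simple j * z := by group
          rwa [he] at this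
        have hnez := cs.length_simple_mul_ne z j
        have hzsz : CLE cs z (cs.simple j * z) := cle_simple_mul cs (by omega)
        refine IH (cs.simple j * z) (cle_trans cs hu₁z hzsz) hszv ?_
        have : cs.simple j * z * v'⁻¹ = cs.simple j * (z * v'⁻¹) := by group
        rw [this]
        exact hadown
      · rw [if_neg haz] at hadown
        exact IH z hu₁z hzdown hadown


/-- With `v = U_{w⁻¹} ↓ u`: if `z ∈ [u, wv]`, `v' ≤ v` and `z(v')⁻¹ ≤ w`, then `v' = v`. -/
theorem stmt18 [Finite W] (u w v : W) (hv : v = downL cs w⁻¹ u) (z v' : W)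
    (hz1 : BruhatLE cs u z) (hz2 : BruhatLE cs z (w * v)) (hv' : BruhatLE cs v' v)
    (h : BruhatLE cs (z * v'⁻¹) w) : v' = v := by
  subst hv
  set ω := rword cs w⁻¹ with hω
  have hred : cs.IsReduced ω := rword_isReduced cs w⁻¹
  have hπ : cs.wordProd ω = w⁻¹ := rword_wordProd cs w⁻¹
  have hπinv : (cs.wordProd ω)⁻¹ = w := by rw [hπ, inv_inv]
  have hdl : downL cs w⁻¹ u = downLWord cs ω u := rfl
  rw [hdl] at hz2 hv' ⊢
  refine main_word cs ω u z v' hred ?_ ?_ ?_ ?_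
  · exact (bruhatLE_iff_cle cs).mp hz1
  · rw [hπinv]
    exact (bruhatLE_iff_cle cs).mp hz2
  · exact (bruhatLE_iff_cle cs).mp hv'
  · rw [hπinv]
    exact (bruhatLE_iff_cle cs).mp h

end PaperBase
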